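/- arXiv:0708.4001 — 2 statements merged into one kernel-verified Lean document; each statement's English description precedes it below -/
import Mathlib

section
/- Let h(z) = exp(-(1+z)/(1-z)) on 𝔻. Then u₂(z) = log(|h'(z)| / ((1-|h(z)|²)|h(z)|)) is a C² solution on 𝔻 of Δu = 4|h(z)|² e^{2u}, and u₂ is not identically equal to u₁(z) = log(1/((1-|z|²)|h(z)|)). In particular the boundary value problem Δu = 4|h|² e^{2u} in 𝔻 with u = +∞ on ∂𝔻 admits more than one solution. -/
/-!
Write `u₂ = log ‖h'‖ - log (1 - ‖h‖²) - log ‖h‖`. As `h` and `h'` have no zeros, the first and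
last terms are harmonic. For any holomorphic `f` into the disk, the chain rule for `log` together
with `Δ‖f‖² = 4‖f'‖²` and `|∇‖f‖²|² = 4‖f‖²‖f'‖²` gives `Δ log (1 - ‖f‖²) = -4‖f'‖² / (1 - ‖f‖²)²`,
so `Δu₂ = 4‖h'‖² / (1 - ‖h‖²)² = 4‖h‖² e^{2u₂}`.
At the origin `u₂(0) = log (2 / (1 - e⁻²)) < 1 = u₁(0)`.
-/

open Complex

/-- Euclidean Laplacian of a real-valued function on `ℂ`. -/
noncomputable def lap (u : ℂ → ℝ) (z : ℂ) : ℝ :=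
  fderiv ℝ (fun w => fderiv ℝ u w 1) z 1 + fderiv ℝ (fun w => fderiv ℝ u w Complex.I) z Complex.I

open InnerProductSpace Filter Topology Laplacian

theorem lap_eq_laplacian {u : ℂ → ℝ} {z : ℂ} (hu : ContDiffAt ℝ 2 u z) : lap u z = Δ u z := by
  have hdu : DifferentiableAt ℝ (fderiv ℝ u) z :=
    (hu.fderiv_right (m := 1) le_rfl).differentiableAt one_ne_zero
  simp [lap, laplacian_eq_iteratedFDeriv_complexPlane, iteratedFDeriv_two_apply,
    fderiv_clm_apply hdu (differentiableAt_const _)]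

theorem fderiv_fderiv_log_apply {E : Type*} [NormedAddCommGroup E] [NormedSpace ℝ E]
    {P : E → ℝ} {z : E} (hP : ContDiffAt ℝ 2 P z) (hPz : P z ≠ 0) (v : E) :
    fderiv ℝ (fun w => fderiv ℝ (fun x => Real.log (P x)) w v) z v =
      fderiv ℝ (fun w => fderiv ℝ P w v) z v / P z - (fderiv ℝ P z v / P z) ^ 2 := by
  have hdP : DifferentiableAt ℝ (fun w => fderiv ℝ P w v) z :=
    ((hP.fderiv_right (m := 1) le_rfl).differentiableAt one_ne_zero).clm_apply
      (differentiableAt_const v)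
  have hlog : (fun w => fderiv ℝ (fun x => Real.log (P x)) w v) =ᶠ[𝓝 z]
      fun w => (P w)⁻¹ * fderiv ℝ P w v := by
    filter_upwards [hP.eventually (by simp), hP.continuousAt.eventually_ne hPz] with w hw hw0
    rw [((hw.differentiableAt two_ne_zero).hasFDerivAt.log hw0).fderiv]
    simp
  have hinv : HasFDerivAt (fun w => (P w)⁻¹) (-(P z ^ 2)⁻¹ • fderiv ℝ P z) z :=
    (hasDerivAt_inv hPz).comp_hasFDerivAt z (hP.differentiableAt two_ne_zero).hasFDerivAt
  rw [hlog.fderiv_eq, (hinv.fun_mul hdP.hasFDerivAt).fderiv]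
  simp only [add_apply, smul_apply, smul_eq_mul]
  field_simp
  ring

theorem laplacian_log_comp {P : ℂ → ℝ} {z : ℂ} (hP : ContDiffAt ℝ 2 P z) (hPz : P z ≠ 0) :
    Δ (fun x => Real.log (P x)) z =
      Δ P z / P z - (fderiv ℝ P z 1 ^ 2 + fderiv ℝ P z I ^ 2) / P z ^ 2 := by
  rw [← lap_eq_laplacian (hP.log hPz), ← lap_eq_laplacian hP]
  simp only [lap, fderiv_fderiv_log_apply hP hPz]
  field_simp
  ring

theorem inner_sq_add_inner_mul_I_sq (a b : ℂ) :
    ⟪a, b⟫_ℝ ^ 2 + ⟪a, b * I⟫_ℝ ^ 2 = ‖a‖ ^ 2 * ‖b‖ ^ 2 := by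
  simp only [Complex.inner, ← Complex.normSq_eq_norm_sq, Complex.normSq_apply, mul_re, mul_im,
    conj_re, conj_im, I_re, I_im]
  ring

section Holomorphic

variable {f : ℂ → ℂ} {z : ℂ}

theorem fderiv_norm_sq_comp_apply (hf : DifferentiableAt ℂ f z) (v : ℂ) :
    fderiv ℝ (fun x => ‖f x‖ ^ 2) z v = 2 * ⟪f z, deriv f z * v⟫_ℝ := by
  rw [hf.hasDerivAt.complexToReal_fderiv.norm_sq.fderiv]
  simp only [smul_apply, ContinuousLinearMap.comp_apply, one_apply_eq_self, smul_eq_mul,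
    coe_innerSL_apply, nsmul_eq_mul, Nat.cast_ofNat]

theorem fderiv_fderiv_norm_sq_comp_apply (hf : AnalyticAt ℂ f z) (v : ℂ) :
    fderiv ℝ (fun w => fderiv ℝ (fun x => ‖f x‖ ^ 2) w v) z v =
      2 * (⟪f z, deriv (deriv f) z * v * v⟫_ℝ + ‖deriv f z * v‖ ^ 2) := by
  have hfirst : (fun w => fderiv ℝ (fun x => ‖f x‖ ^ 2) w v) =ᶠ[𝓝 z]
      fun w => 2 * ⟪f w, deriv f w * v⟫_ℝ := by
    filter_upwards [hf.eventually_analyticAt] with w hw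
    exact fderiv_norm_sq_comp_apply hw.differentiableAt v
  have hf' : HasFDerivAt (fun w => deriv f w * v)
      ((deriv (deriv f) z * v) • (1 : ℂ →L[ℝ] ℂ)) z :=
    (hf.deriv.differentiableAt.hasDerivAt.mul_const v).complexToReal_fderiv
  rw [hfirst.fderiv_eq,
    ((hf.differentiableAt.hasDerivAt.complexToReal_fderiv.inner ℝ hf').const_mul 2).fderiv]
  simp only [smul_apply, ContinuousLinearMap.comp_apply, ContinuousLinearMap.prod_apply,
    one_apply_eq_self, smul_eq_mul, fderivInnerCLM_apply, real_inner_self_eq_norm_sq]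

theorem contDiffAt_norm_sq_comp (hf : AnalyticAt ℂ f z) :
    ContDiffAt ℝ 2 (fun x => ‖f x‖ ^ 2) z :=
  (hf.contDiffAt.restrict_scalars ℝ).norm_sq ℝ

theorem laplacian_norm_sq_comp (hf : AnalyticAt ℂ f z) :
    Δ (fun x => ‖f x‖ ^ 2) z = 4 * ‖deriv f z‖ ^ 2 := by
  rw [← lap_eq_laplacian (contDiffAt_norm_sq_comp hf)]
  simp only [lap, fderiv_fderiv_norm_sq_comp_apply hf, mul_assoc, I_mul_I, mul_neg_one, mul_one,
    inner_neg_right (𝕜 := ℝ), norm_mul, norm_I]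
  ring

theorem laplacian_log_one_sub_norm_sq (hf : AnalyticAt ℂ f z) (hfz : ‖f z‖ < 1) :
    Δ (fun x => Real.log (1 - ‖f x‖ ^ 2)) z = -4 * ‖deriv f z‖ ^ 2 / (1 - ‖f z‖ ^ 2) ^ 2 := by
  have hP : ContDiffAt ℝ 2 (fun x => 1 - ‖f x‖ ^ 2) z :=
    contDiffAt_const.sub (contDiffAt_norm_sq_comp hf)
  have hPz : 1 - ‖f z‖ ^ 2 ≠ 0 := by nlinarith [norm_nonneg (f z)]
  have hΔP : Δ (fun x : ℂ => (1 : ℝ) - ‖f x‖ ^ 2) z = -(4 * ‖deriv f z‖ ^ 2) := by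
    rw [← laplacian_norm_sq_comp hf]
    exact (contDiffAt_const.laplacian_sub (contDiffAt_norm_sq_comp hf)).trans (by simp)
  rw [laplacian_log_comp hP hPz, hΔP, fderiv_const_sub]
  simp only [neg_apply, fderiv_norm_sq_comp_apply hf.differentiableAt, mul_one]
  have hsum := inner_sq_add_inner_mul_I_sq (f z) (deriv f z)
  field_simp
  linear_combination -4 * hsum

theorem norm_deriv_div_pos (hf0 : f z ≠ 0) (hf' : deriv f z ≠ 0) (hfz : ‖f z‖ < 1) :
    0 < ‖deriv f z‖ / ((1 - ‖f z‖ ^ 2) * ‖f z‖) :=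
  div_pos (norm_pos_iff.mpr hf')
    (mul_pos (sub_pos.mpr (pow_lt_one₀ (norm_nonneg _) hfz two_ne_zero)) (norm_pos_iff.mpr hf0))

variable (hf : AnalyticAt ℂ f z) (hf0 : f z ≠ 0) (hf' : deriv f z ≠ 0) (hfz : ‖f z‖ < 1)
include hf hf0 hf' hfz

theorem log_norm_deriv_div_eventuallyEq :
    (fun x => Real.log (‖deriv f x‖ / ((1 - ‖f x‖ ^ 2) * ‖f x‖))) =ᶠ[𝓝 z]
      (fun x => Real.log ‖deriv f x‖) - (fun x => Real.log (1 - ‖f x‖ ^ 2)) -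
        fun x => Real.log ‖f x‖ := by
  filter_upwards [hf.continuousAt.eventually_ne hf0, hf.deriv.continuousAt.eventually_ne hf',
    hf.continuousAt.norm.eventually_lt continuousAt_const hfz] with x hx0 hx' hx1
  have hsq : 1 - ‖f x‖ ^ 2 ≠ 0 := by nlinarith [norm_nonneg (f x)]
  rw [Real.log_div (norm_ne_zero_iff.mpr hx') (mul_ne_zero hsq (norm_ne_zero_iff.mpr hx0)),
    Real.log_mul hsq (norm_ne_zero_iff.mpr hx0), Pi.sub_apply, Pi.sub_apply]
  ring

theorem contDiffAt_log_norm_deriv_div :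
    ContDiffAt ℝ 2 (fun x => Real.log (‖deriv f x‖ / ((1 - ‖f x‖ ^ 2) * ‖f x‖))) z := by
  have hsq : 1 - ‖f z‖ ^ 2 ≠ 0 := by nlinarith [norm_nonneg (f z)]
  refine ContDiffAt.congr_of_eventuallyEq ?_ (log_norm_deriv_div_eventuallyEq hf hf0 hf' hfz)
  exact ((hf.deriv.harmonicAt_log_norm hf').1.sub
    ((contDiffAt_const.sub (contDiffAt_norm_sq_comp hf)).log hsq)).sub
    (hf.harmonicAt_log_norm hf0).1

theorem lap_log_norm_deriv_div :
    lap (fun x => Real.log (‖deriv f x‖ / ((1 - ‖f x‖ ^ 2) * ‖f x‖))) z =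
      4 * ‖f z‖ ^ 2 * Real.exp (2 * Real.log (‖deriv f z‖ / ((1 - ‖f z‖ ^ 2) * ‖f z‖))) := by
  have hsq : 1 - ‖f z‖ ^ 2 ≠ 0 := by nlinarith [norm_nonneg (f z)]
  have hΔ' := hf.deriv.harmonicAt_log_norm hf'
  have hΔ0 := hf.harmonicAt_log_norm hf0
  have hlog := (contDiffAt_const.sub (contDiffAt_norm_sq_comp hf)).log hsq
  have hdiff : ContDiffAt ℝ 2
      ((fun x => Real.log ‖deriv f x‖) - fun x => Real.log (1 - ‖f x‖ ^ 2)) z := hΔ'.1.sub hlog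
  rw [lap_eq_laplacian (contDiffAt_log_norm_deriv_div hf hf0 hf' hfz),
    (laplacian_congr_nhds (log_norm_deriv_div_eventuallyEq hf hf0 hf' hfz)).eq_of_nhds,
    hdiff.laplacian_sub hΔ0.1, hΔ'.1.laplacian_sub hlog, hΔ'.2.eq_of_nhds, hΔ0.2.eq_of_nhds,
    laplacian_log_one_sub_norm_sq hf hfz, two_mul, Real.exp_add,
    Real.exp_log (norm_deriv_div_pos hf0 hf' hfz), Pi.zero_apply]
  field_simp
  ring

end Holomorphic

noncomputable def singularInner (z : ℂ) : ℂ := cexp (-(1 + z) / (1 - z))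

section SingularInner

variable {z : ℂ}

theorem sub_ne_zero_of_norm_lt_one (hz : ‖z‖ < 1) : 1 - z ≠ 0 :=
  sub_ne_zero.mpr fun h => by simp [← h] at hz

theorem hasDerivAt_singularInner (hz : 1 - z ≠ 0) :
    HasDerivAt singularInner (singularInner z * (-2 / (1 - z) ^ 2)) z := by
  have hq : HasDerivAt (fun w => -(1 + w) / (1 - w)) (-2 / (1 - z) ^ 2) z := by
    have hnum : HasDerivAt (fun w : ℂ => -(1 + w)) (-1) z :=
      ((hasDerivAt_id' z).const_add 1).neg
    refine (hnum.fun_div ((hasDerivAt_id' z).const_sub 1) hz).congr_deriv ?_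
    ring
  exact hq.cexp

theorem analyticAt_singularInner (hz : 1 - z ≠ 0) : AnalyticAt ℂ singularInner z := by
  unfold singularInner
  fun_prop (disch := exact hz)

theorem deriv_singularInner_ne_zero (hz : 1 - z ≠ 0) : deriv singularInner z ≠ 0 := by
  rw [(hasDerivAt_singularInner hz).deriv]
  exact mul_ne_zero (exp_ne_zero _) (div_ne_zero (by norm_num) (pow_ne_zero 2 hz))

theorem re_one_add_div_one_sub_pos (hz : ‖z‖ < 1) : 0 < ((1 + z) / (1 - z)).re := by
  have hnorm : z.re ^ 2 + z.im ^ 2 < 1 := by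
    rw [← sq_lt_one_iff₀ (norm_nonneg z), Complex.sq_norm, Complex.normSq_apply] at hz
    nlinarith
  rw [div_re, ← add_div]
  refine div_pos ?_ (normSq_pos.mpr (sub_ne_zero_of_norm_lt_one hz))
  simp only [add_re, sub_re, add_im, sub_im, one_re, one_im]
  nlinarith

theorem norm_singularInner_lt_one (hz : ‖z‖ < 1) : ‖singularInner z‖ < 1 := by
  rw [singularInner, norm_exp, Real.exp_lt_one_iff, neg_div, neg_re, neg_neg_iff_pos]
  exact re_one_add_div_one_sub_pos hz

end SingularInner

theorem norm_singularInner_zero : ‖singularInner 0‖ = Real.exp (-1) := by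
  simp [singularInner, norm_exp]

theorem norm_deriv_singularInner_zero : ‖deriv singularInner 0‖ = 2 * Real.exp (-1) := by
  rw [(hasDerivAt_singularInner (by norm_num)).deriv, norm_mul, norm_singularInner_zero]
  norm_num
  ring

theorem norm_deriv_singularInner_div_lt_at_zero :
    ‖deriv singularInner 0‖ / ((1 - ‖singularInner 0‖ ^ 2) * ‖singularInner 0‖) <
      1 / ((1 - ‖(0 : ℂ)‖ ^ 2) * ‖singularInner 0‖) := by
  rw [norm_deriv_singularInner_zero, norm_singularInner_zero, norm_zero]
  -- with `a = e⁻¹` this says `a² + 2a < 1`, i.e. `a < √2 - 1`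
  have ha := Real.exp_pos (-1)
  have ha' := Real.exp_neg_one_lt_d9
  rw [div_lt_div_iff₀ (by nlinarith) (by nlinarith)]
  nlinarith

/-- For the atomic singular inner function `h(z) = exp(-(1+z)/(1-z))` on the unit disk,
`u₂(z) = log (|h'(z)|/((1-|h(z)|²)|h(z)|))` is a C² solution of `Δu = 4|h|² e^{2u}` on `𝔻`
which is not identically equal to `u₁(z) = log (1/((1-|z|²)|h(z)|))`; hence the boundary
value problem `Δu = 4|h|²e^{2u}`, `u = +∞` on `∂𝔻`, has more than one solution. -/
theorem singular_inner_solution_two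
    (h : ℂ → ℂ) (hdef : ∀ z, h z = Complex.exp (-(1 + z) / (1 - z)))
    (u₁ u₂ : ℂ → ℝ)
    (hu₁ : ∀ z, u₁ z = Real.log (1 / ((1 - ‖z‖^2) * ‖h z‖)))
    (hu₂ : ∀ z, u₂ z = Real.log (‖deriv h z‖ /
        ((1 - ‖h z‖^2) * ‖h z‖))) :
    ContDiffOn ℝ 2 u₂ (Metric.ball (0:ℂ) 1) ∧
    (∀ z ∈ Metric.ball (0:ℂ) 1,
      lap u₂ z = 4 * ‖h z‖^2 * Real.exp (2 * u₂ z)) ∧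
    ¬ (∀ z ∈ Metric.ball (0:ℂ) 1, u₂ z = u₁ z) := by
  obtain rfl : h = singularInner := funext hdef
  obtain rfl : u₂ = fun z => Real.log (‖deriv singularInner z‖ /
      ((1 - ‖singularInner z‖ ^ 2) * ‖singularInner z‖)) := funext hu₂
  have hdisk : ∀ z ∈ Metric.ball (0 : ℂ) 1, AnalyticAt ℂ singularInner z ∧
      singularInner z ≠ 0 ∧ deriv singularInner z ≠ 0 ∧ ‖singularInner z‖ < 1 := by
    intro z hz
    rw [mem_ball_zero_iff] at hz
    have h1 := sub_ne_zero_of_norm_lt_one hz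
    exact ⟨analyticAt_singularInner h1, exp_ne_zero _, deriv_singularInner_ne_zero h1,
      norm_singularInner_lt_one hz⟩
  refine ⟨fun z hz => ?_, fun z hz => ?_, fun hall => ?_⟩
  · obtain ⟨ha, h0, h', h1⟩ := hdisk z hz
    exact (contDiffAt_log_norm_deriv_div ha h0 h' h1).contDiffWithinAt
  · obtain ⟨ha, h0, h', h1⟩ := hdisk z hz
    exact lap_log_norm_deriv_div ha h0 h' h1
  · obtain ⟨-, h0, h', h1⟩ := hdisk 0 (Metric.mem_ball_self one_pos)
    have h00 := hall 0 (Metric.mem_ball_self one_pos)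
    rw [hu₁] at h00
    exact (Real.log_lt_log (norm_deriv_div_pos h0 h' h1)
      norm_deriv_singularInner_div_lt_at_zero).ne h00
end

section
/- Let Ω ⊆ ℂ be a simply connected domain, h : Ω → ℂ holomorphic and not identically zero, and u : Ω → ℝ a C² solution of Δu = 4|h(z)|²e^{2u}. If f, g : Ω → 𝔻 are two holomorphic maps with u(z) = log(|f'(z)|/((1-|f(z)|²)|h(z)|)) = log(|g'(z)|/((1-|g(z)|²)|h(z)|)) on Ω (off the zeros of h), then g = T ∘ f for some conformal automorphism T of 𝔻. -/
open Complex

/-- `T` is a conformal automorphism of the unit disk. -/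
def IsDiskAutomorphism (T : ℂ → ℂ) : Prop :=
  DifferentiableOn ℂ T (Metric.ball (0:ℂ) 1) ∧
  Set.MapsTo T (Metric.ball (0:ℂ) 1) (Metric.ball (0:ℂ) 1) ∧
  ∃ S : ℂ → ℂ, DifferentiableOn ℂ S (Metric.ball (0:ℂ) 1) ∧
    Set.MapsTo S (Metric.ball (0:ℂ) 1) (Metric.ball (0:ℂ) 1) ∧
    (∀ z ∈ Metric.ball (0:ℂ) 1, S (T z) = z) ∧
    (∀ z ∈ Metric.ball (0:ℂ) 1, T (S z) = z)

/-! Off the zeros of `h`, the representation forces `f' ≠ 0`: otherwise either `f' ≡ 0` nearby,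
so that `u ≡ log 0 = 0` there against `Δu > 0`, or `u → -∞`, against continuity. Hence `f` and `g`
have the same hyperbolic density `|f'| / (1 - |f|²)` there. Disk automorphisms preserve this
density, so after composing with suitable ones both maps vanish at a base point `z₀` with the same
positive derivative. Two such maps `F`, `G` with equal densities coincide near `z₀`: if `F - G`
vanished to a finite order `m + 1 ≥ 2`, the `r ^ m` coefficient of the density identity along the
ray `z₀ + r S` would give `Re (G'(z₀) conj (S ^ m K)) = 0` for every unit `S`, where `K ≠ 0` is the
leading coefficient of `F' - G'`. The identity theorem propagates `F = G` to all of `Ω`. -/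

open Complex ComplexConjugate Filter Topology

noncomputable def diskMobius (e a z : ℂ) : ℂ := e * ((z - a) / (1 - conj a * z))

namespace diskMobius

variable {e a z : ℂ}

lemma one_sub_conj_mul_ne_zero (ha : ‖a‖ < 1) (hz : ‖z‖ < 1) : 1 - conj a * z ≠ 0 := by
  have : ‖conj a * z‖ < 1 := by
    rw [norm_mul, Complex.norm_conj]
    nlinarith [norm_nonneg a, norm_nonneg z]
  intro h0
  rw [← sub_eq_zero.mp h0, norm_one] at this
  exact this.false

lemma sq_norm_one_sub_conj_mul_sub_sq_norm_sub (a z : ℂ) :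
    ‖1 - conj a * z‖ ^ 2 - ‖z - a‖ ^ 2 = (1 - ‖a‖ ^ 2) * (1 - ‖z‖ ^ 2) := by
  simp only [← normSq_eq_norm_sq, normSq_apply, sub_re, sub_im, one_re, one_im, mul_re, mul_im,
    conj_re, conj_im]
  ring

lemma one_sub_sq_norm (he : ‖e‖ = 1) (ha : ‖a‖ < 1) (hz : ‖z‖ < 1) :
    1 - ‖diskMobius e a z‖ ^ 2 = (1 - ‖a‖ ^ 2) * (1 - ‖z‖ ^ 2) / ‖1 - conj a * z‖ ^ 2 := by
  have hd : ‖1 - conj a * z‖ ≠ 0 := norm_ne_zero_iff.mpr (one_sub_conj_mul_ne_zero ha hz)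
  rw [diskMobius, norm_mul, he, one_mul, norm_div, div_pow, one_sub_div (pow_ne_zero 2 hd),
    sq_norm_one_sub_conj_mul_sub_sq_norm_sub]

lemma norm_lt_one (he : ‖e‖ = 1) (ha : ‖a‖ < 1) (hz : ‖z‖ < 1) : ‖diskMobius e a z‖ < 1 := by
  have hpos : 0 < 1 - ‖diskMobius e a z‖ ^ 2 := by
    rw [one_sub_sq_norm he ha hz]
    have hd := one_sub_conj_mul_ne_zero ha hz
    have ha₂ : 0 < 1 - ‖a‖ ^ 2 := by nlinarith [norm_nonneg a]
    have hz₂ : 0 < 1 - ‖z‖ ^ 2 := by nlinarith [norm_nonneg z]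
    positivity
  nlinarith [norm_nonneg (diskMobius e a z)]

lemma mapsTo_ball (he : ‖e‖ = 1) (ha : ‖a‖ < 1) :
    Set.MapsTo (diskMobius e a) (Metric.ball 0 1) (Metric.ball 0 1) := fun _ hz ↦
  mem_ball_zero_iff.mpr (norm_lt_one he ha (mem_ball_zero_iff.mp hz))

lemma hasDerivAt (e : ℂ) (hd : 1 - conj a * z ≠ 0) :
    HasDerivAt (diskMobius e a) (e * (1 - ‖a‖ ^ 2 : ℝ) / (1 - conj a * z) ^ 2) z := by
  have hnum : HasDerivAt (fun w : ℂ ↦ w - a) 1 z := (hasDerivAt_id z).sub_const a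
  have hden : HasDerivAt (fun w : ℂ ↦ 1 - conj a * w) (-conj a) z := by
    simpa using ((hasDerivAt_id z).const_mul (conj a)).const_sub 1
  refine ((hnum.div hden hd).const_mul e).congr_deriv ?_
  push_cast
  rw [← mul_conj']
  ring

lemma hasDerivAt_comp (e : ℂ) {f : ℂ → ℂ} {f' : ℂ} (hd : 1 - conj a * f z ≠ 0)
    (hf : HasDerivAt f f' z) :
    HasDerivAt (fun w ↦ diskMobius e a (f w))
      (e * (1 - ‖a‖ ^ 2 : ℝ) / (1 - conj a * f z) ^ 2 * f') z :=
  (hasDerivAt e hd).comp z hf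

lemma differentiableOn (e : ℂ) (ha : ‖a‖ < 1) :
    DifferentiableOn ℂ (diskMobius e a) (Metric.ball 0 1) := fun _ hz ↦
  (hasDerivAt e (one_sub_conj_mul_ne_zero ha (mem_ball_zero_iff.mp hz))).differentiableAt
    |>.differentiableWithinAt

lemma apply_self : diskMobius e a a = 0 := by simp [diskMobius]

lemma inv_apply (he : ‖e‖ = 1) (ha : ‖a‖ < 1) (hz : ‖z‖ < 1) :
    diskMobius (conj e) (-(e * a)) (diskMobius e a z) = z := by
  have hd := one_sub_conj_mul_ne_zero ha hz
  have hee : conj e * e = 1 := by rw [mul_comm, mul_conj, normSq_eq_norm_sq, he]; norm_num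
  have haa : (1 : ℂ) - a * conj a ≠ 0 := by
    rw [mul_conj, normSq_eq_norm_sq]
    exact_mod_cast (by nlinarith [norm_nonneg a] : (1 : ℝ) - ‖a‖ ^ 2 ≠ 0)
  simp only [diskMobius, map_neg, map_mul]
  set w := (z - a) / (1 - conj a * z)
  have hw : w * (1 - conj a * z) = z - a := div_mul_cancel₀ _ hd
  have hden : 1 - -(conj e * conj a) * (e * w) ≠ 0 := by
    intro h0
    apply haa
    linear_combination (1 - conj a * z) * h0 - conj a * w * (1 - conj a * z) * hee - conj a * hw
  rw [← mul_div_assoc, div_eq_iff hden]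
  linear_combination (w + a - z * conj a * w) * hee + hw

end diskMobius

lemma isDiskAutomorphism_diskMobius {e a : ℂ} (he : ‖e‖ = 1) (ha : ‖a‖ < 1) :
    IsDiskAutomorphism (diskMobius e a) := by
  have he' : ‖conj e‖ = 1 := by rwa [Complex.norm_conj]
  have ha' : ‖-(e * a)‖ < 1 := by rwa [norm_neg, norm_mul, he, one_mul]
  refine ⟨diskMobius.differentiableOn e ha, diskMobius.mapsTo_ball he ha,
    diskMobius (conj e) (-(e * a)), diskMobius.differentiableOn _ ha',
    diskMobius.mapsTo_ball he' ha', fun z hz ↦ diskMobius.inv_apply he ha (mem_ball_zero_iff.mp hz),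
    fun z hz ↦ ?_⟩
  have hinv := diskMobius.inv_apply he' ha' (mem_ball_zero_iff.mp hz)
  have hee : conj e * e = 1 := by rw [mul_comm, mul_conj, normSq_eq_norm_sq, he]; norm_num
  rwa [conj_conj, mul_neg, neg_neg, ← mul_assoc, hee, one_mul] at hinv

lemma IsDiskAutomorphism.comp {T₁ T₂ : ℂ → ℂ} (h₁ : IsDiskAutomorphism T₁)
    (h₂ : IsDiskAutomorphism T₂) : IsDiskAutomorphism (T₂ ∘ T₁) := by
  obtain ⟨hd₁, hm₁, S₁, hS₁d, hS₁m, hl₁, hr₁⟩ := h₁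
  obtain ⟨hd₂, hm₂, S₂, hS₂d, hS₂m, hl₂, hr₂⟩ := h₂
  refine ⟨hd₂.comp hd₁ hm₁, hm₂.comp hm₁, S₁ ∘ S₂, hS₁d.comp hS₂d hS₂m, hS₁m.comp hS₂m,
    fun z hz ↦ ?_, fun z hz ↦ ?_⟩
  · simp only [Function.comp_apply, hl₂ _ (hm₁ hz), hl₁ z hz]
  · simp only [Function.comp_apply, hr₁ _ (hS₂m hz), hr₂ z hz]

noncomputable def hypDensity (f : ℂ → ℂ) (z : ℂ) : ℝ := ‖deriv f z‖ / (1 - ‖f z‖ ^ 2)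

lemma hypDensity_pos {f : ℂ → ℂ} {z : ℂ} (hfz : ‖f z‖ < 1) (hf' : deriv f z ≠ 0) :
    0 < hypDensity f z :=
  div_pos (norm_pos_iff.mpr hf') (by nlinarith [norm_nonneg (f z)])

lemma hypDensity_diskMobius_comp {e a z : ℂ} {f : ℂ → ℂ} (he : ‖e‖ = 1) (ha : ‖a‖ < 1)
    (hf : DifferentiableAt ℂ f z) (hfz : ‖f z‖ < 1) :
    hypDensity (fun w ↦ diskMobius e a (f w)) z = hypDensity f z := by
  have hd := diskMobius.one_sub_conj_mul_ne_zero ha hfz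
  have ha₂ : 0 < 1 - ‖a‖ ^ 2 := by nlinarith [norm_nonneg a]
  rw [hypDensity, hypDensity, (diskMobius.hasDerivAt_comp e hd hf.hasDerivAt).deriv,
    diskMobius.one_sub_sq_norm he ha hfz]
  simp only [norm_mul, norm_div, norm_pow, he, norm_real, Real.norm_eq_abs, abs_of_pos ha₂]
  field_simp

lemma exists_deriv_diskMobius_comp_eq_hypDensity {f : ℂ → ℂ} {z₀ : ℂ}
    (hf : DifferentiableAt ℂ f z₀) (hfz : ‖f z₀‖ < 1) (hf' : deriv f z₀ ≠ 0) :
    ∃ e : ℂ, ‖e‖ = 1 ∧ deriv (fun w ↦ diskMobius e (f z₀) (f w)) z₀ = hypDensity f z₀ := by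
  have hd := diskMobius.one_sub_conj_mul_ne_zero hfz hfz
  have hn : (‖deriv f z₀‖ : ℂ) ≠ 0 := by exact_mod_cast norm_ne_zero_iff.mpr hf'
  refine ⟨conj (deriv f z₀) / ‖deriv f z₀‖, by simp [norm_ne_zero_iff.mpr hf'], ?_⟩
  rw [(diskMobius.hasDerivAt_comp _ hd hf.hasDerivAt).deriv, hypDensity, conj_mul']
  push_cast
  field_simp
  rw [conj_mul']

lemma lap_eq_zero_of_eventuallyEq_const {u : ℂ → ℝ} {z : ℂ} {c : ℝ}
    (hu : u =ᶠ[𝓝 z] fun _ ↦ c) : lap u z = 0 := by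
  have hDu : ∀ v : ℂ, (fun w ↦ fderiv ℝ u w v) =ᶠ[𝓝 z] fun _ ↦ 0 := fun v ↦ by
    filter_upwards [hu.eventuallyEq_nhds] with w hw
    rw [hw.fderiv_eq, fderiv_const_apply, zero_apply]
  rw [lap, (hDu 1).fderiv_eq, (hDu I).fderiv_eq, fderiv_const_apply]
  simp

lemma ne_zero_of_eventuallyEq_log_norm_div {u : ℂ → ℝ} {ψ : ℂ → ℂ} {D : ℂ → ℝ} {z₀ : ℂ}
    (hu : ContinuousAt u z₀) (hlap : lap u z₀ ≠ 0) (hψ : AnalyticAt ℂ ψ z₀)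
    (hD : ContinuousAt D z₀) (hD₀ : D z₀ ≠ 0)
    (hrep : ∀ᶠ z in 𝓝 z₀, u z = Real.log (‖ψ z‖ / D z)) : ψ z₀ ≠ 0 := by
  intro hψ₀
  rcases hψ.eventually_eq_zero_or_eventually_ne_zero with hzero | hne
  · refine hlap (lap_eq_zero_of_eventuallyEq_const (c := 0) ?_)
    filter_upwards [hrep, hzero] with z hz hz0
    rw [hz, hz0, norm_zero, zero_div, Real.log_zero]
  · have hφ : Tendsto (fun z ↦ ‖ψ z‖ / D z) (𝓝[≠] z₀) (𝓝[≠] 0) := by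
      refine tendsto_nhdsWithin_iff.mpr ⟨?_, ?_⟩
      · have : Tendsto (fun z ↦ ‖ψ z‖ / D z) (𝓝 z₀) (𝓝 (‖ψ z₀‖ / D z₀)) :=
          (hψ.continuousAt.norm.div hD hD₀).tendsto
        rw [hψ₀, norm_zero, zero_div] at this
        exact this.mono_left nhdsWithin_le_nhds
      · filter_upwards [hne, nhdsWithin_le_nhds (hD.eventually_ne hD₀)] with z hz hDz
        exact div_ne_zero (norm_ne_zero_iff.mpr hz) hDz
    have hbot : Tendsto u (𝓝[≠] z₀) atBot :=
      (Real.tendsto_log_nhdsNE_zero.comp hφ).congr' (EventuallyEq.symm (nhdsWithin_le_nhds hrep))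
    exact not_tendsto_atBot_of_tendsto_nhds (hu.tendsto.mono_left nhdsWithin_le_nhds) hbot

lemma sq_norm_add_ofReal_mul_pow_mul {S : ℂ} (hS : ‖S‖ = 1) (P K : ℂ) (r : ℝ) (m : ℕ) :
    ‖P + ((r : ℂ) * S) ^ m * K‖ ^ 2
      = ‖P‖ ^ 2 + r ^ m * (r ^ m * ‖K‖ ^ 2 + 2 * (P * conj (S ^ m * K)).re) := by
  have hrS : ((r : ℂ) * S) ^ m * K = ((r ^ m : ℝ) : ℂ) * (S ^ m * K) := by push_cast; ring
  rw [hrS, ← normSq_eq_norm_sq, ← normSq_eq_norm_sq, ← normSq_eq_norm_sq, normSq_add,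
    normSq_mul, normSq_mul, normSq_ofReal, map_pow, normSq_eq_norm_sq S, hS, map_mul,
    conj_ofReal, mul_left_comm P, re_ofReal_mul]
  ring

/-- Squared and expanded, the identity is divisible by `r ^ m`; the quotient `Φ r` tends to
`2 Re (p 0 * conj (S ^ m * k 0))` from its first term and to `0` from its second. -/
lemma re_mul_conj_eq_zero_of_ray {S : ℂ} (hS : ‖S‖ = 1) {m : ℕ} (hm : m ≠ 0) {p q k η : ℝ → ℂ}
    (hp : ContinuousAt p 0) (hq : ContinuousAt q 0) (hk : ContinuousAt k 0)
    (hη : ContinuousAt η 0) (hq₀ : q 0 = 0)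
    (hid : ∀ᶠ r in 𝓝[>] 0, ‖p r + ((r : ℂ) * S) ^ m * k r‖ * (1 - ‖q r‖ ^ 2)
      = ‖p r‖ * (1 - ‖q r + ((r : ℂ) * S) ^ (m + 1) * η r‖ ^ 2)) :
    (p 0 * conj (S ^ m * k 0)).re = 0 := by
  set A : ℝ → ℝ := fun r ↦ r ^ m * ‖k r‖ ^ 2 + 2 * (p r * conj (S ^ m * k r)).re
  set B : ℝ → ℝ := fun r ↦ r ^ (m + 1) * ‖η r‖ ^ 2 + 2 * (q r * conj (S ^ (m + 1) * η r)).re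
  set Φ : ℝ → ℝ := fun r ↦ A r * (1 - ‖q r‖ ^ 2) ^ 2
    - ‖p r‖ ^ 2 * r * (r ^ (m + 1) * B r ^ 2 - 2 * (1 - ‖q r‖ ^ 2) * B r)
  have hΦ : ∀ᶠ r in 𝓝[>] 0, Φ r = 0 := by
    filter_upwards [hid, self_mem_nhdsWithin] with r hr hr0
    have hsq : ‖p r + ((r : ℂ) * S) ^ m * k r‖ ^ 2 * (1 - ‖q r‖ ^ 2) ^ 2
        = ‖p r‖ ^ 2 * (1 - ‖q r + ((r : ℂ) * S) ^ (m + 1) * η r‖ ^ 2) ^ 2 := by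
      rw [← mul_pow, ← mul_pow, hr]
    rw [sq_norm_add_ofReal_mul_pow_mul hS, sq_norm_add_ofReal_mul_pow_mul hS] at hsq
    refine (mul_eq_zero.mp ?_).resolve_left (pow_ne_zero m (ne_of_gt hr0))
    linear_combination hsq
  have hcont : ContinuousAt Φ 0 := by
    simp only [Φ, A, B]
    fun_prop
  have hΦ₀ : Φ 0 = 0 := tendsto_nhds_unique (hcont.tendsto.mono_left nhdsWithin_le_nhds)
    (tendsto_const_nhds.congr' (EventuallyEq.symm hΦ))
  simpa [Φ, A, B, hq₀, hm] using hΦ₀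

lemma mul_conj_eq_zero_of_density_identity {P Q K H : ℂ → ℂ} {z₀ : ℂ} {m : ℕ} (hm : m ≠ 0)
    (hP : ContinuousAt P z₀) (hQ : ContinuousAt Q z₀) (hK : ContinuousAt K z₀)
    (hH : ContinuousAt H z₀) (hQ₀ : Q z₀ = 0)
    (hid : ∀ᶠ z in 𝓝 z₀, ‖P z + (z - z₀) ^ m * K z‖ * (1 - ‖Q z‖ ^ 2)
      = ‖P z‖ * (1 - ‖Q z + (z - z₀) ^ (m + 1) * H z‖ ^ 2)) :
    P z₀ * conj (K z₀) = 0 := by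
  by_contra hw
  set w := P z₀ * conj (K z₀)
  obtain ⟨S, hSm⟩ := IsAlgClosed.exists_pow_nat_eq (w / ‖w‖) (Nat.pos_of_ne_zero hm)
  have hS : ‖S‖ = 1 := by
    refine (pow_eq_one_iff_of_nonneg (norm_nonneg S) hm).mp ?_
    rw [← norm_pow, hSm, norm_div, norm_real, norm_norm, div_self (norm_ne_zero_iff.mpr hw)]
  have hcont : ∀ {F : ℂ → ℂ}, ContinuousAt F z₀ → ContinuousAt (fun r : ℝ ↦ F (z₀ + r * S)) 0 :=
    fun hF ↦ hF.comp_of_eq (by fun_prop) (by simp)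
  have hρ : Tendsto (fun r : ℝ ↦ z₀ + r * S) (𝓝[>] 0) (𝓝 z₀) :=
    (hcont continuousAt_id).tendsto.mono_left nhdsWithin_le_nhds |>.trans_eq (by simp)
  have hzero := re_mul_conj_eq_zero_of_ray hS hm (hcont hP) (hcont hQ) (hcont hK) (hcont hH)
    (by simpa using hQ₀) (by simpa using hρ.eventually hid)
  have hre : P z₀ * conj (S ^ m * K z₀) = ((‖w‖ ^ 2 / ‖w‖ : ℝ) : ℂ) := by
    rw [map_mul, hSm, map_div₀, conj_ofReal]
    push_cast
    rw [← mul_conj' w]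
    field_simp
    ring
  simp only [ofReal_zero, zero_mul, add_zero, hre, ofReal_re, sq,
    mul_div_cancel_right₀ _ (norm_ne_zero_iff.mpr hw)] at hzero
  exact hw (norm_eq_zero.mp hzero)

lemma exists_pow_mul_of_deriv_eq_zero {ψ : ℂ → ℂ} {z₀ : ℂ} (hψ : AnalyticAt ℂ ψ z₀)
    (h₀ : ψ z₀ = 0) (h₁ : deriv ψ z₀ = 0) (hne : ¬ψ =ᶠ[𝓝 z₀] 0) :
    ∃ m ≠ 0, ∃ H K : ℂ → ℂ, ContinuousAt H z₀ ∧ ContinuousAt K z₀ ∧ K z₀ ≠ 0 ∧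
      ∀ᶠ z in 𝓝 z₀, ψ z = (z - z₀) ^ (m + 1) * H z ∧ deriv ψ z = (z - z₀) ^ m * K z := by
  obtain ⟨n, hn⟩ := ENat.ne_top_iff_exists.mp (mt analyticOrderAt_eq_top.mp hne)
  have h2 : 2 ≤ n := by
    have : ((2 : ℕ) : ℕ∞) ≤ analyticOrderAt ψ z₀ := by
      rw [natCast_le_analyticOrderAt_iff_iteratedDeriv_eq_zero hψ]
      intro i hi
      interval_cases i
      · simpa using h₀
      · simpa using h₁
    exact_mod_cast hn ▸ this
  obtain ⟨m, rfl⟩ : ∃ m, n = m + 1 := ⟨n - 1, by omega⟩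
  have hn' : analyticOrderAt ψ z₀ = ↑m + 1 := by rw [← hn]; push_cast; rfl
  obtain ⟨H, hH, -, hψH⟩ := (hψ.analyticOrderAt_eq_natCast).mp hn.symm
  obtain ⟨K, hK, hK₀, hψK⟩ :=
    (hψ.deriv.analyticOrderAt_eq_natCast).mp (analyticOrderAt_deriv_of_pos hψ hn')
  refine ⟨m, by omega, H, K, hH.continuousAt, hK.continuousAt, hK₀, ?_⟩
  filter_upwards [hψH, hψK] with z hzH hzK
  exact ⟨hzH, hzK⟩

lemma eventually_norm_lt_one {F : ℂ → ℂ} {z₀ : ℂ} (hF : ContinuousAt F z₀) (hF₀ : F z₀ = 0) :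
    ∀ᶠ z in 𝓝 z₀, ‖F z‖ < 1 :=
  hF.norm.eventually_lt continuousAt_const (by simp [hF₀])

lemma eventuallyEq_of_hypDensity_eventuallyEq {F G : ℂ → ℂ} {z₀ : ℂ} (hF : AnalyticAt ℂ F z₀)
    (hG : AnalyticAt ℂ G z₀) (hF₀ : F z₀ = 0) (hG₀ : G z₀ = 0) (hFG' : deriv F z₀ = deriv G z₀)
    (hG' : deriv G z₀ ≠ 0) (hρ : hypDensity F =ᶠ[𝓝 z₀] hypDensity G) : F =ᶠ[𝓝 z₀] G := by
  by_contra hne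
  have hderiv : ∀ᶠ z in 𝓝 z₀, deriv (F - G) z = deriv F z - deriv G z := by
    filter_upwards [hF.eventually_analyticAt, hG.eventually_analyticAt] with z hFz hGz
    exact deriv_sub hFz.differentiableAt hGz.differentiableAt
  obtain ⟨m, hm, H, K, hH, hK, hK₀, hfac⟩ := exists_pow_mul_of_deriv_eq_zero (hF.sub hG)
    (by simp [hF₀, hG₀]) (by rw [hderiv.self_of_nhds, hFG', sub_self])
    (fun h ↦ hne (by filter_upwards [h] with z hz using sub_eq_zero.mp hz))
  have hid : ∀ᶠ z in 𝓝 z₀, ‖deriv G z + (z - z₀) ^ m * K z‖ * (1 - ‖G z‖ ^ 2)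
      = ‖deriv G z‖ * (1 - ‖G z + (z - z₀) ^ (m + 1) * H z‖ ^ 2) := by
    filter_upwards [hfac, hderiv, hρ, eventually_norm_lt_one hF.continuousAt hF₀,
      eventually_norm_lt_one hG.continuousAt hG₀] with z ⟨hψ, hψ'⟩ hdz hρz hF1 hG1
    have hFz : F z = G z + (z - z₀) ^ (m + 1) * H z := by rw [← hψ, Pi.sub_apply]; ring
    have hF'z : deriv F z = deriv G z + (z - z₀) ^ m * K z := by rw [← hψ', hdz]; ring
    rw [← hFz, ← hF'z]
    rw [hypDensity, hypDensity, div_eq_div_iff (by nlinarith [norm_nonneg (F z)])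
      (by nlinarith [norm_nonneg (G z)])] at hρz
    linarith
  have hzero := mul_conj_eq_zero_of_density_identity hm hG.deriv.continuousAt hG.continuousAt
    hK hH hG₀ hid
  exact hG' ((mul_eq_zero.mp hzero).resolve_right ((map_ne_zero _).mpr hK₀))

lemma deriv_ne_zero_of_log_rep {Ω : Set ℂ} (hΩ : IsOpen Ω) {h f : ℂ → ℂ} {u : ℂ → ℝ}
    (hh : DifferentiableOn ℂ h Ω) (hu : ContinuousOn u Ω)
    (hpde : ∀ z ∈ Ω, lap u z = 4 * ‖h z‖ ^ 2 * Real.exp (2 * u z))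
    (hf : DifferentiableOn ℂ f Ω) (hfm : Set.MapsTo f Ω (Metric.ball 0 1))
    (hrep : ∀ z ∈ Ω, h z ≠ 0 → u z = Real.log (‖deriv f z‖ / ((1 - ‖f z‖ ^ 2) * ‖h z‖)))
    {z₀ : ℂ} (hz₀ : z₀ ∈ Ω) (hh₀ : h z₀ ≠ 0) : deriv f z₀ ≠ 0 := by
  have hnhds := hΩ.mem_nhds hz₀
  have hhc : ContinuousAt h z₀ := hh.continuousOn.continuousAt hnhds
  have hfc : ContinuousAt f z₀ := hf.continuousOn.continuousAt hnhds
  have hf₀ : 0 < 1 - ‖f z₀‖ ^ 2 := by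
    nlinarith [norm_nonneg (f z₀), mem_ball_zero_iff.mp (hfm hz₀)]
  have hh₀' : 0 < ‖h z₀‖ := norm_pos_iff.mpr hh₀
  refine ne_zero_of_eventuallyEq_log_norm_div (hu.continuousAt hnhds) ?_
    ((hf.analyticOnNhd hΩ).deriv z₀ hz₀) (D := fun z ↦ (1 - ‖f z‖ ^ 2) * ‖h z‖) (by fun_prop)
    (mul_pos hf₀ hh₀').ne' ?_
  · rw [hpde z₀ hz₀]
    positivity
  · filter_upwards [hnhds, hhc.eventually_ne hh₀] with z hz hhz using hrep z hz hhz

lemma hypDensity_eq_of_log_eq {f g : ℂ → ℂ} {z : ℂ} {c : ℝ} (hf : 0 < hypDensity f z)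
    (hg : 0 < hypDensity g z) (hc : 0 < c)
    (h : Real.log (‖deriv f z‖ / ((1 - ‖f z‖ ^ 2) * c))
      = Real.log (‖deriv g z‖ / ((1 - ‖g z‖ ^ 2) * c))) :
    hypDensity f z = hypDensity g z := by
  rw [← div_div, ← div_div] at h
  exact (div_left_inj' hc.ne').mp (Real.log_injOn_pos (div_pos hf hc) (div_pos hg hc) h)

theorem exists_isDiskAutomorphism_of_hypDensity_eventuallyEq {Ω : Set ℂ} (hΩ : IsOpen Ω)
    (hconn : IsPreconnected Ω) {f g : ℂ → ℂ} (hf : DifferentiableOn ℂ f Ω)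
    (hfm : Set.MapsTo f Ω (Metric.ball 0 1)) (hg : DifferentiableOn ℂ g Ω)
    (hgm : Set.MapsTo g Ω (Metric.ball 0 1)) {z₀ : ℂ} (hz₀ : z₀ ∈ Ω) (hg' : deriv g z₀ ≠ 0)
    (hρ : hypDensity f =ᶠ[𝓝 z₀] hypDensity g) :
    ∃ T : ℂ → ℂ, IsDiskAutomorphism T ∧ ∀ z ∈ Ω, g z = T (f z) := by
  have hball {φ : ℂ → ℂ} (hφ : Set.MapsTo φ Ω (Metric.ball 0 1)) {z : ℂ} (hz : z ∈ Ω) :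
      ‖φ z‖ < 1 := mem_ball_zero_iff.mp (hφ hz)
  have hfd {z : ℂ} (hz : z ∈ Ω) := hf.differentiableAt (hΩ.mem_nhds hz)
  have hgd {z : ℂ} (hz : z ∈ Ω) := hg.differentiableAt (hΩ.mem_nhds hz)
  have hρ₀ : 0 < hypDensity f z₀ := hρ.self_of_nhds ▸ hypDensity_pos (hball hgm hz₀) hg'
  have hf' : deriv f z₀ ≠ 0 := fun h0 ↦ hρ₀.ne' (by simp [hypDensity, h0])
  obtain ⟨e₁, he₁, hF'⟩ :=
    exists_deriv_diskMobius_comp_eq_hypDensity (hfd hz₀) (hball hfm hz₀) hf'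
  obtain ⟨e₂, he₂, hG'⟩ :=
    exists_deriv_diskMobius_comp_eq_hypDensity (hgd hz₀) (hball hgm hz₀) hg'
  set F := fun z ↦ diskMobius e₁ (f z₀) (f z)
  set G := fun z ↦ diskMobius e₂ (g z₀) (g z)
  have hFa : AnalyticOnNhd ℂ F Ω :=
    ((diskMobius.differentiableOn e₁ (hball hfm hz₀)).comp hf hfm).analyticOnNhd hΩ
  have hGa : AnalyticOnNhd ℂ G Ω :=
    ((diskMobius.differentiableOn e₂ (hball hgm hz₀)).comp hg hgm).analyticOnNhd hΩ
  have hloc : F =ᶠ[𝓝 z₀] G := by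
    refine eventuallyEq_of_hypDensity_eventuallyEq (hFa z₀ hz₀) (hGa z₀ hz₀)
      diskMobius.apply_self diskMobius.apply_self (by rw [hF', hG', hρ.self_of_nhds])
      (hG' ▸ ofReal_ne_zero.mpr (hρ.self_of_nhds ▸ hρ₀.ne')) ?_
    filter_upwards [hρ, hΩ.mem_nhds hz₀] with z hρz hz
    rw [hypDensity_diskMobius_comp he₁ (hball hfm hz₀) (hfd hz) (hball hfm hz),
      hypDensity_diskMobius_comp he₂ (hball hgm hz₀) (hgd hz) (hball hgm hz), hρz]
  have hFG : Set.EqOn F G Ω := hFa.eqOn_of_preconnected_of_eventuallyEq hGa hconn hz₀ hloc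
  refine ⟨diskMobius (conj e₂) (-(e₂ * g z₀)) ∘ diskMobius e₁ (f z₀),
    (isDiskAutomorphism_diskMobius he₁ (hball hfm hz₀)).comp
      (isDiskAutomorphism_diskMobius (by rwa [Complex.norm_conj])
        (by rw [norm_neg, norm_mul, he₂, one_mul]; exact hball hgm hz₀)), fun z hz ↦ ?_⟩
  rw [Function.comp_apply, show diskMobius e₁ (f z₀) (f z) = G z from hFG hz,
    diskMobius.inv_apply he₂ (hball hgm hz₀) (hball hgm hz)]

theorem liouville_representation_unique_general
    (Ω : Set ℂ) (hΩ : IsOpen Ω) (hconn : IsConnected Ω)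
    (h : ℂ → ℂ) (hh : DifferentiableOn ℂ h Ω) (hne : ∃ z ∈ Ω, h z ≠ 0)
    (u : ℂ → ℝ) (hu : ContDiffOn ℝ 2 u Ω)
    (hpde : ∀ z ∈ Ω, lap u z = 4 * (‖h z‖)^2 * Real.exp (2 * u z))
    (f g : ℂ → ℂ)
    (hf : DifferentiableOn ℂ f Ω) (hfm : Set.MapsTo f Ω (Metric.ball (0:ℂ) 1))
    (hg : DifferentiableOn ℂ g Ω) (hgm : Set.MapsTo g Ω (Metric.ball (0:ℂ) 1))
    (hrepf : ∀ z ∈ Ω, h z ≠ 0 →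
      u z = Real.log (‖deriv f z‖ /
        ((1 - (‖f z‖)^2) * ‖h z‖)))
    (hrepg : ∀ z ∈ Ω, h z ≠ 0 →
      u z = Real.log (‖deriv g z‖ /
        ((1 - (‖g z‖)^2) * ‖h z‖))) :
    ∃ T : ℂ → ℂ, IsDiskAutomorphism T ∧ ∀ z ∈ Ω, g z = T (f z) := by
  obtain ⟨z₀, hz₀, hh₀⟩ := hne
  have hball {φ : ℂ → ℂ} (hφ : Set.MapsTo φ Ω (Metric.ball 0 1)) {z : ℂ} (hz : z ∈ Ω) :
      ‖φ z‖ < 1 := mem_ball_zero_iff.mp (hφ hz)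
  have hf' {z : ℂ} (hz : z ∈ Ω) (hhz : h z ≠ 0) : deriv f z ≠ 0 :=
    deriv_ne_zero_of_log_rep hΩ hh hu.continuousOn hpde hf hfm hrepf hz hhz
  have hg' {z : ℂ} (hz : z ∈ Ω) (hhz : h z ≠ 0) : deriv g z ≠ 0 :=
    deriv_ne_zero_of_log_rep hΩ hh hu.continuousOn hpde hg hgm hrepg hz hhz
  have hN : IsOpen (Ω ∩ {z | h z ≠ 0}) :=
    hh.continuousOn.isOpen_inter_preimage hΩ isOpen_compl_singleton
  refine exists_isDiskAutomorphism_of_hypDensity_eventuallyEq hΩ hconn.isPreconnected hf hfm hg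
    hgm hz₀ (hg' hz₀ hh₀) ?_
  filter_upwards [hN.mem_nhds ⟨hz₀, hh₀⟩] with z ⟨hz, hhz⟩
  exact hypDensity_eq_of_log_eq (hypDensity_pos (hball hfm hz) (hf' hz hhz))
    (hypDensity_pos (hball hgm hz) (hg' hz hhz)) (norm_pos_iff.mpr hhz)
    ((hrepf z hz hhz).symm.trans (hrepg z hz hhz))

/-- Uniqueness in the generalized Liouville representation: two holomorphic maps
`f, g : Ω → 𝔻` representing the same solution `u` of `Δu = 4|h|²e^{2u}` on a simply
connected domain differ by postcomposition with a conformal automorphism of `𝔻`. -/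
theorem liouville_representation_unique
    (Ω : Set ℂ) (hΩ : IsOpen Ω) (hconn : IsConnected Ω)
    (hsc : SimplyConnectedSpace Ω)
    (h : ℂ → ℂ) (hh : DifferentiableOn ℂ h Ω) (hne : ∃ z ∈ Ω, h z ≠ 0)
    (u : ℂ → ℝ) (hu : ContDiffOn ℝ 2 u Ω)
    (hpde : ∀ z ∈ Ω, lap u z = 4 * (‖h z‖)^2 * Real.exp (2 * u z))
    (f g : ℂ → ℂ)
    (hf : DifferentiableOn ℂ f Ω) (hfm : Set.MapsTo f Ω (Metric.ball (0:ℂ) 1))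
    (hg : DifferentiableOn ℂ g Ω) (hgm : Set.MapsTo g Ω (Metric.ball (0:ℂ) 1))
    (hrepf : ∀ z ∈ Ω, h z ≠ 0 →
      u z = Real.log (‖deriv f z‖ /
        ((1 - (‖f z‖)^2) * ‖h z‖)))
    (hrepg : ∀ z ∈ Ω, h z ≠ 0 →
      u z = Real.log (‖deriv g z‖ /
        ((1 - (‖g z‖)^2) * ‖h z‖))) :
    ∃ T : ℂ → ℂ, IsDiskAutomorphism T ∧ ∀ z ∈ Ω, g z = T (f z) :=
  liouville_representation_unique_general Ω hΩ hconn h hh hne u hu hpde f g hf hfm hg hgm hrepf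
    hrepg
end
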